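/- For any nonnegative integers i and j, the sum over m of (-1)^{m+i} (ν+m+1)^2 (m+1) / ((i-m)!(m+1-j)!) equals (i+1)(i+ν+1)^2 δ_{i+1,j} + ((ν+i)^2 + 2(i+1)(i+ν) + i + 1) δ_{i,j} + (2ν+3i) δ_{i-1,j} + δ_{i-2,j}. -/
import Mathlib


open Finset

/-- `1/n!` extended to integers: zero for negative arguments. -/
noncomputable def invFact (n : ℤ) : ℝ :=
  if 0 ≤ n then ((n.toNat).factorial : ℝ)⁻¹ else 0

lemma invFact_neg {n : ℤ} (h : n < 0) : invFact n = 0 := by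
  simp [invFact, not_le.mpr h]

lemma invFact_natCast (n : ℕ) : invFact (n : ℤ) = ((n.factorial : ℝ))⁻¹ := by
  simp [invFact]

lemma mul_invFact (t : ℤ) : (t : ℝ) * invFact t = invFact (t - 1) := by
  rcases lt_trichotomy t 0 with h | h | h
  · rw [invFact_neg h, invFact_neg (by omega), mul_zero]
  · subst h; rw [invFact_neg (show (0:ℤ)-1 < 0 by omega)]; simp
  · have h1 : (1:ℤ) ≤ t := h
    obtain ⟨n, rfl⟩ : ∃ n : ℕ, t = (n : ℤ) + 1 := ⟨(t-1).toNat, by omega⟩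
    have : ((n:ℤ) + 1 - 1) = (n : ℤ) := by ring
    rw [this, show ((n:ℤ)+1) = ((n+1 : ℕ) : ℤ) by push_cast; ring,
      invFact_natCast, invFact_natCast]
    have hf : (((n+1).factorial : ℝ)) = (n+1) * n.factorial := by
      rw [Nat.factorial_succ]; push_cast; ring
    have h0 : (n.factorial : ℝ) ≠ 0 := Nat.cast_ne_zero.mpr (Nat.factorial_ne_zero n)
    have h0' : ((n:ℝ)+1) ≠ 0 := by positivity
    rw [hf]; push_cast; field_simp

lemma alt_sum (M : ℕ) :
    ∑ k ∈ range (M + 1), (-1 : ℝ) ^ k * ((k.factorial : ℝ)⁻¹ * (((M - k).factorial : ℝ))⁻¹)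
      = if M = 0 then 1 else 0 := by
  have h1 : ∀ k ∈ range (M + 1),
      (-1 : ℝ) ^ k * ((k.factorial : ℝ)⁻¹ * (((M - k).factorial : ℝ))⁻¹)
        = ((-1 : ℝ) ^ k * (M.choose k : ℝ)) * ((M.factorial : ℝ))⁻¹ := by
    intro k hk
    rw [mem_range] at hk
    have hkM : k ≤ M := by omega
    have := Nat.choose_mul_factorial_mul_factorial hkM
    have hc : ((M.choose k : ℝ)) * (k.factorial : ℝ) * ((M - k).factorial : ℝ)
        = (M.factorial : ℝ) := by exact_mod_cast congrArg (Nat.cast (R := ℝ)) this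
    have h2 : (k.factorial : ℝ) ≠ 0 := Nat.cast_ne_zero.mpr (Nat.factorial_ne_zero k)
    have h3 : ((M - k).factorial : ℝ) ≠ 0 := Nat.cast_ne_zero.mpr (Nat.factorial_ne_zero _)
    have h4 : (M.factorial : ℝ) ≠ 0 := Nat.cast_ne_zero.mpr (Nat.factorial_ne_zero M)
    have key : (k.factorial : ℝ)⁻¹ * (((M - k).factorial : ℝ))⁻¹
        = (M.choose k : ℝ) * ((M.factorial : ℝ))⁻¹ := by
      field_simp
      linarith [hc]
    rw [key]; ring
  rw [sum_congr rfl h1, ← sum_mul]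
  have h5 : ∑ k ∈ range (M + 1), (-1 : ℝ) ^ k * (M.choose k : ℝ)
      = if M = 0 then 1 else 0 := by
    by_cases hM : M = 0
    · subst hM; simp
    · rw [if_neg hM]
      exact_mod_cast congrArg (fun z : ℤ => (z : ℝ))
        (Int.alternating_sum_range_choose_of_ne hM)
  rw [h5]
  split <;> simp_all [Nat.factorial]


lemma key_sum (i c : ℕ) (hc : 1 ≤ c) :
    ∑ m ∈ range (i + 1), (-1 : ℝ) ^ (m + i) * invFact ((i : ℤ) - m) * invFact ((m : ℤ) + 1 - c)
      = if (i : ℤ) + 1 = c then 1 else 0 := by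
  obtain ⟨c', rfl⟩ : ∃ c', c = c' + 1 := ⟨c - 1, by omega⟩
  rw [← Finset.sum_range_reflect]
  have step : ∀ k ∈ range (i + 1),
      (-1 : ℝ) ^ ((i + 1 - 1 - k) + i) * invFact ((i : ℤ) - (i + 1 - 1 - k : ℕ))
          * invFact (((i + 1 - 1 - k : ℕ) : ℤ) + 1 - (c' + 1 : ℕ))
        = (-1 : ℝ) ^ k * ((k.factorial : ℝ)⁻¹ * invFact ((i : ℤ) - c' - k)) := by
    intro k hk
    rw [mem_range] at hk
    have hki : k ≤ i := by omega
    have e1 : (i + 1 - 1 - k : ℕ) = i - k := by omega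
    have e2 : ((i - k : ℕ) : ℤ) = (i : ℤ) - k := by omega
    have e3 : ((i : ℤ) - (i - k : ℕ)) = (k : ℤ) := by omega
    have e4 : (((i - k : ℕ) : ℤ) + 1 - ((c' + 1 : ℕ) : ℤ)) = (i : ℤ) - c' - k := by
      push_cast; omega
    rw [e1, e3, e4, invFact_natCast]
    have hpow : (-1 : ℝ) ^ ((i - k) + i) = (-1 : ℝ) ^ k := by
      have h2 : ((i - k) + i) + k = 2 * i := by omega
      have : (-1 : ℝ) ^ (((i - k) + i) + k) = 1 := by
        rw [h2, pow_mul]; norm_num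
      rw [pow_add] at this
      have hk2 : (-1 : ℝ) ^ k * (-1 : ℝ) ^ k = 1 := by
        rw [← pow_add]
        have : k + k = 2 * k := by omega
        rw [this, pow_mul]; norm_num
      calc (-1 : ℝ) ^ ((i - k) + i) = (-1 : ℝ) ^ ((i - k) + i) * ((-1 : ℝ) ^ k * (-1 : ℝ) ^ k)
            := by rw [hk2, mul_one]
        _ = ((-1 : ℝ) ^ ((i - k) + i) * (-1 : ℝ) ^ k) * (-1 : ℝ) ^ k := by ring
        _ = (-1 : ℝ) ^ k := by rw [this, one_mul]
    rw [hpow]; ring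
  rw [sum_congr rfl step]
  by_cases hci : c' ≤ i
  · have hM : ∀ k ∈ range ((i - c') + 1), (-1 : ℝ) ^ k * ((k.factorial : ℝ)⁻¹ * invFact ((i : ℤ) - c' - k))
        = (-1 : ℝ) ^ k * ((k.factorial : ℝ)⁻¹ * (((i - c' - k).factorial : ℝ))⁻¹) := by
      intro k hk
      rw [mem_range] at hk
      have : ((i : ℤ) - c' - k) = ((i - c' - k : ℕ) : ℤ) := by omega
      rw [this, invFact_natCast]
    rw [← sum_subset (Finset.range_subset_range.mpr (show (i - c') + 1 ≤ i + 1 by omega))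
      (by
        intro k _ hk
        rw [mem_range] at hk
        have : ((i : ℤ) - c' - k) < 0 := by omega
        rw [invFact_neg this]; ring)]
    rw [sum_congr rfl hM, alt_sum]
    have : ((i : ℤ) + 1 = ((c' + 1 : ℕ) : ℤ)) ↔ (i - c' = 0) := by omega
    simp only [this]
  · have hz : ∀ k ∈ range (i + 1), (-1 : ℝ) ^ k * ((k.factorial : ℝ)⁻¹ * invFact ((i : ℤ) - c' - k)) = 0 := by
      intro k hk
      have : ((i : ℤ) - c' - k) < 0 := by omega
      rw [invFact_neg this]; ring
    rw [sum_congr rfl hz, Finset.sum_const_zero, if_neg (by omega)]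

lemma decomp (ν : ℝ) (j m : ℕ) :
    (ν + m + 1) ^ 2 * (m + 1) * invFact ((m : ℤ) + 1 - j)
      = (j : ℝ) * ((j : ℝ) + ν) ^ 2 * invFact ((m : ℤ) + 1 - j)
        + (3 * (j : ℝ) ^ 2 + 3 * j + 1 + 4 * ν * j + 2 * ν + ν ^ 2) * invFact ((m : ℤ) + 1 - ((j + 1 : ℕ) : ℤ))
        + (3 * (j : ℝ) + 3 + 2 * ν) * invFact ((m : ℤ) + 1 - ((j + 2 : ℕ) : ℤ))
        + invFact ((m : ℤ) + 1 - ((j + 3 : ℕ) : ℤ)) := by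
  set t : ℤ := (m : ℤ) + 1 - j with ht
  have e1 : (m : ℤ) + 1 - ((j + 1 : ℕ) : ℤ) = t - 1 := by push_cast [ht]; ring
  have e2 : (m : ℤ) + 1 - ((j + 2 : ℕ) : ℤ) = t - 2 := by push_cast [ht]; ring
  have e3 : (m : ℤ) + 1 - ((j + 3 : ℕ) : ℤ) = t - 3 := by push_cast [ht]; ring
  have h1 : invFact (t - 1) = (t : ℝ) * invFact t := (mul_invFact t).symm
  have h2 : invFact (t - 2) = ((t : ℝ) - 1) * ((t : ℝ) * invFact t) := by
    have : t - 2 = (t - 1) - 1 := by ring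
    rw [this, ← mul_invFact (t - 1), h1]; push_cast; ring
  have h3 : invFact (t - 3) = ((t : ℝ) - 2) * (((t : ℝ) - 1) * ((t : ℝ) * invFact t)) := by
    have : t - 3 = (t - 2) - 1 := by ring
    rw [this, ← mul_invFact (t - 2), h2]; push_cast; ring
  rw [e1, e2, e3, h1, h2, h3]
  have hT : ((t : ℤ) : ℝ) = (m : ℝ) + 1 - j := by push_cast [ht]; ring
  rw [hT]
  ring

lemma final_combine (ν : ℝ) (i j : ℕ) :
    (j : ℝ) * ((j : ℝ) + ν) ^ 2 * (if (i : ℤ) + 1 = j then 1 else 0)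
      + (3 * (j : ℝ) ^ 2 + 3 * j + 1 + 4 * ν * j + 2 * ν + ν ^ 2) * (if (i : ℤ) = j then 1 else 0)
      + (3 * (j : ℝ) + 3 + 2 * ν) * (if (i : ℤ) - 1 = j then 1 else 0)
      + 1 * (if (i : ℤ) - 2 = j then 1 else 0)
      = (i + 1) * ((i : ℝ) + ν + 1) ^ 2 * (if (i : ℤ) + 1 = j then 1 else 0)
        + ((ν + i) ^ 2 + 2 * (i + 1) * ((i : ℝ) + ν) + i + 1) * (if (i : ℤ) = j then 1 else 0)
        + (2 * ν + 3 * i) * (if (i : ℤ) - 1 = j then 1 else 0)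
        + (if (i : ℤ) - 2 = j then 1 else 0) := by
  by_cases h1 : (i : ℤ) + 1 = j
  · obtain rfl : j = i + 1 := by omega
    rw [if_pos h1, if_neg (by omega), if_neg (by omega), if_neg (by omega)]
    push_cast; ring
  · by_cases h2 : (i : ℤ) = j
    · obtain rfl : j = i := by omega
      rw [if_pos h2, if_neg h1, if_neg (by omega), if_neg (by omega)]
      push_cast; ring
    · by_cases h3 : (i : ℤ) - 1 = j
      · obtain rfl : i = j + 1 := by omega
        rw [if_pos h3, if_neg h1, if_neg h2, if_neg (by omega)]
        push_cast; ring
      · by_cases h4 : (i : ℤ) - 2 = j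
        · obtain rfl : i = j + 2 := by omega
          rw [if_pos h4, if_neg h1, if_neg h2, if_neg h3]
          push_cast; ring
        · rw [if_neg h1, if_neg h2, if_neg h3, if_neg h4]
          ring

theorem sum_identity_three (ν : ℝ) (hν : 0 ≤ ν) (i j : ℕ) :
    ∑ m ∈ Finset.range (i + 1),
      (-1 : ℝ) ^ (m + i) * (ν + m + 1) ^ 2 * (m + 1) *
        invFact ((i : ℤ) - m) * invFact ((m : ℤ) + 1 - j)
      = (i + 1) * ((i : ℝ) + ν + 1) ^ 2 * (if (i : ℤ) + 1 = j then 1 else 0)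
        + ((ν + i) ^ 2 + 2 * (i + 1) * ((i : ℝ) + ν) + i + 1) * (if (i : ℤ) = j then 1 else 0)
        + (2 * ν + 3 * i) * (if (i : ℤ) - 1 = j then 1 else 0)
        + (if (i : ℤ) - 2 = j then 1 else 0) := by
  have hpt : ∀ m ∈ Finset.range (i + 1),
      (-1 : ℝ) ^ (m + i) * (ν + m + 1) ^ 2 * (m + 1) *
          invFact ((i : ℤ) - m) * invFact ((m : ℤ) + 1 - j)
        = (j : ℝ) * ((j : ℝ) + ν) ^ 2 *
            ((-1 : ℝ) ^ (m + i) * invFact ((i : ℤ) - m) * invFact ((m : ℤ) + 1 - j))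
          + (3 * (j : ℝ) ^ 2 + 3 * j + 1 + 4 * ν * j + 2 * ν + ν ^ 2) *
            ((-1 : ℝ) ^ (m + i) * invFact ((i : ℤ) - m) * invFact ((m : ℤ) + 1 - ((j + 1 : ℕ) : ℤ)))
          + (3 * (j : ℝ) + 3 + 2 * ν) *
            ((-1 : ℝ) ^ (m + i) * invFact ((i : ℤ) - m) * invFact ((m : ℤ) + 1 - ((j + 2 : ℕ) : ℤ)))
          + 1 *
            ((-1 : ℝ) ^ (m + i) * invFact ((i : ℤ) - m) * invFact ((m : ℤ) + 1 - ((j + 3 : ℕ) : ℤ))) := by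
    intro m _
    have hd := decomp ν j m
    calc (-1 : ℝ) ^ (m + i) * (ν + m + 1) ^ 2 * (m + 1) *
          invFact ((i : ℤ) - m) * invFact ((m : ℤ) + 1 - j)
        = ((-1 : ℝ) ^ (m + i) * invFact ((i : ℤ) - m)) *
            ((ν + m + 1) ^ 2 * (m + 1) * invFact ((m : ℤ) + 1 - j)) := by ring
      _ = ((-1 : ℝ) ^ (m + i) * invFact ((i : ℤ) - m)) *
            ((j : ℝ) * ((j : ℝ) + ν) ^ 2 * invFact ((m : ℤ) + 1 - j)
              + (3 * (j : ℝ) ^ 2 + 3 * j + 1 + 4 * ν * j + 2 * ν + ν ^ 2) * invFact ((m : ℤ) + 1 - ((j + 1 : ℕ) : ℤ))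
              + (3 * (j : ℝ) + 3 + 2 * ν) * invFact ((m : ℤ) + 1 - ((j + 2 : ℕ) : ℤ))
              + invFact ((m : ℤ) + 1 - ((j + 3 : ℕ) : ℤ))) := by rw [hd]
      _ = _ := by ring
  rw [Finset.sum_congr rfl hpt]
  rw [Finset.sum_add_distrib, Finset.sum_add_distrib, Finset.sum_add_distrib,
    ← Finset.mul_sum, ← Finset.mul_sum, ← Finset.mul_sum, ← Finset.mul_sum]
  rw [key_sum i (j + 1) (by omega), key_sum i (j + 2) (by omega), key_sum i (j + 3) (by omega)]
  have hj0 : (j : ℝ) * ((j : ℝ) + ν) ^ 2 *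
      (∑ m ∈ Finset.range (i + 1),
        (-1 : ℝ) ^ (m + i) * invFact ((i : ℤ) - m) * invFact ((m : ℤ) + 1 - j))
      = (j : ℝ) * ((j : ℝ) + ν) ^ 2 * (if (i : ℤ) + 1 = j then 1 else 0) := by
    by_cases hj : j = 0
    · subst hj; norm_num
    · rw [key_sum i j (by omega)]
  rw [hj0]
  have e1 : ((i : ℤ) + 1 = ((j + 1 : ℕ) : ℤ)) ↔ ((i : ℤ) = j) := by omega
  have e2 : ((i : ℤ) + 1 = ((j + 2 : ℕ) : ℤ)) ↔ ((i : ℤ) - 1 = j) := by omega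
  have e3 : ((i : ℤ) + 1 = ((j + 3 : ℕ) : ℤ)) ↔ ((i : ℤ) - 2 = j) := by omega
  simp only [e1, e2, e3]
  exact final_combine ν i j
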